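/- arXiv:2008.10764 — 4 statements merged into one kernel-verified Lean document; each statement's English description precedes it below -/
import Mathlib

section
/- (Pythagorean theorem for modularization with overlap.) Let A, B, C be nonempty finite types and X = A × B × C. For a probability distribution p on X with p (a, b, c) > 0 for all (a, b, c), define the modularization φ p by (φ p)(a, b, c) = p_{AC}(a, c) * p_{BC}(b, c) / p_C(c), where p_{AC}(a, c) = ∑_b p (a, b, c), p_{BC}(b, c) = ∑_a p (a, b, c), and p_C(c) = ∑_{a, b} p (a, b, c); φ p is again a probability distribution. Then for all probability distributions p and q on X with strictly positive values, D(p‖φ q) = D(p‖φ p) + D(φ p‖φ q). -/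
open Finset

/-- A probability distribution on a finite type. -/
def IsDist {Y : Type*} [Fintype Y] (p : Y → ℝ) : Prop :=
  (∀ y, 0 ≤ p y) ∧ ∑ y, p y = 1

/-- Kullback–Leibler divergence (terms with `p y = 0` contribute `0`,
since `0 * Real.log _ = 0`). -/
noncomputable def KL {Y : Type*} [Fintype Y] (p q : Y → ℝ) : ℝ :=
  ∑ y, p y * Real.log (p y / q y)

/-- Marginal over `A × C` of a distribution on `A × B × C`. -/
noncomputable def margAC {A B C : Type*} [Fintype A] [Fintype B] [Fintype C]
    (p : A × B × C → ℝ) : A × C → ℝ :=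
  fun ac => ∑ b, p (ac.1, b, ac.2)

/-- Marginal over `B × C` of a distribution on `A × B × C`. -/
noncomputable def margBC {A B C : Type*} [Fintype A] [Fintype B] [Fintype C]
    (p : A × B × C → ℝ) : B × C → ℝ :=
  fun bc => ∑ a, p (a, bc.1, bc.2)

/-- Marginal over `C` of a distribution on `A × B × C`. -/
noncomputable def margC {A B C : Type*} [Fintype A] [Fintype B] [Fintype C]
    (p : A × B × C → ℝ) : C → ℝ :=
  fun c => ∑ a, ∑ b, p (a, b, c)

/-- The modularization operator: `(φ p)(a, b, c) = p_{AC}(a, c) * p_{BC}(b, c) / p_C(c)`. -/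
noncomputable def modularize {A B C : Type*} [Fintype A] [Fintype B] [Fintype C]
    (p : A × B × C → ℝ) : A × B × C → ℝ :=
  fun x => margAC p (x.1, x.2.2) * margBC p (x.2.1, x.2.2) / margC p x.2.2

section Aux

variable {A B C : Type*} [Fintype A] [Fintype B] [Fintype C]

lemma sumAC (r : A × B × C → ℝ) (g : A × C → ℝ) :
    ∑ x : A × B × C, r x * g (x.1, x.2.2) = ∑ ac : A × C, margAC r ac * g ac := by
  simp only [Fintype.sum_prod_type, margAC, Finset.sum_mul]
  exact Finset.sum_congr rfl fun a _ => Finset.sum_comm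

lemma sumBC (r : A × B × C → ℝ) (g : B × C → ℝ) :
    ∑ x : A × B × C, r x * g (x.2.1, x.2.2) = ∑ bc : B × C, margBC r bc * g bc := by
  simp only [Fintype.sum_prod_type, margBC, Finset.sum_mul]
  rw [Finset.sum_comm]
  exact Finset.sum_congr rfl fun b _ => Finset.sum_comm

lemma sumC (r : A × B × C → ℝ) (g : C → ℝ) :
    ∑ x : A × B × C, r x * g x.2.2 = ∑ c, margC r c * g c := by
  simp only [Fintype.sum_prod_type, margC, Finset.sum_mul]
  calc ∑ a, ∑ b, ∑ c, r (a, b, c) * g c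
      = ∑ a, ∑ c, ∑ b, r (a, b, c) * g c :=
        Finset.sum_congr rfl fun a _ => Finset.sum_comm
    _ = ∑ c, ∑ a, ∑ b, r (a, b, c) * g c := Finset.sum_comm

variable [Nonempty A] [Nonempty B] [Nonempty C]
variable (p : A × B × C → ℝ)

lemma margAC_pos (hppos : ∀ x, 0 < p x) (ac : A × C) : 0 < margAC p ac :=
  Finset.sum_pos (fun b _ => hppos _) Finset.univ_nonempty

lemma margBC_pos (hppos : ∀ x, 0 < p x) (bc : B × C) : 0 < margBC p bc :=
  Finset.sum_pos (fun a _ => hppos _) Finset.univ_nonempty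

lemma margC_pos (hppos : ∀ x, 0 < p x) (c : C) : 0 < margC p c :=
  Finset.sum_pos (fun a _ => Finset.sum_pos (fun b _ => hppos _) Finset.univ_nonempty)
    Finset.univ_nonempty

lemma margAC_sum (c : C) : ∑ a, margAC p (a, c) = margC p c := rfl

lemma margBC_sum (c : C) : ∑ b, margBC p (b, c) = margC p c := by
  simp only [margBC, margC]
  exact Finset.sum_comm

lemma modularize_pos (hppos : ∀ x, 0 < p x) (x : A × B × C) : 0 < modularize p x :=
  div_pos (mul_pos (margAC_pos p hppos _) (margBC_pos p hppos _)) (margC_pos p hppos _)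

lemma margAC_modularize (hppos : ∀ x, 0 < p x) (ac : A × C) : margAC (modularize p) ac = margAC p ac := by
  obtain ⟨a, c⟩ := ac
  have hZ : margC p c ≠ 0 := (margC_pos p hppos c).ne'
  simp only [margAC, modularize]
  rw [← Finset.sum_div, ← Finset.mul_sum, margBC_sum, mul_div_assoc, div_self hZ, mul_one]

lemma margBC_modularize (hppos : ∀ x, 0 < p x) (bc : B × C) : margBC (modularize p) bc = margBC p bc := by
  obtain ⟨b, c⟩ := bc
  have hZ : margC p c ≠ 0 := (margC_pos p hppos c).ne'
  simp only [margBC, modularize]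
  rw [← Finset.sum_div, ← Finset.sum_mul, margAC_sum, mul_comm, mul_div_assoc, div_self hZ,
    mul_one]

lemma margC_modularize (hppos : ∀ x, 0 < p x) (c : C) : margC (modularize p) c = margC p c := by
  have : margC (modularize p) c = ∑ a, margAC (modularize p) (a, c) := rfl
  rw [this]
  simp_rw [margAC_modularize p hppos]
  exact margAC_sum p c

end Aux

/-- Pythagorean theorem for modularization with overlap:
`D(p‖φ q) = D(p‖φ p) + D(φ p‖φ q)` for strictly positive distributions `p`, `q`. -/
theorem stmt13 {A B C : Type*} [Fintype A] [Fintype B] [Fintype C]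
    [Nonempty A] [Nonempty B] [Nonempty C]
    (p q : A × B × C → ℝ) (hp : IsDist p) (hq : IsDist q)
    (hppos : ∀ x, 0 < p x) (hqpos : ∀ x, 0 < q x) :
    KL p (modularize q) = KL p (modularize p) + KL (modularize p) (modularize q) := by
  have hPpos : ∀ x, 0 < modularize p x := modularize_pos p hppos
  have hQpos : ∀ x, 0 < modularize q x := modularize_pos q hqpos
  -- step 1: split the log
  have h1 : KL p (modularize q)
      = KL p (modularize p)
        + ∑ x, p x * Real.log (modularize p x / modularize q x) := by
    unfold KL
    rw [← Finset.sum_add_distrib]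
    refine Finset.sum_congr rfl fun x _ => ?_
    rw [← mul_add, ← Real.log_mul (div_pos (hppos x) (hPpos x)).ne'
      (div_pos (hPpos x) (hQpos x)).ne']
    congr 1
    rw [div_mul_div_comm, mul_comm (p x), mul_div_mul_left _ _ (hPpos x).ne']
  -- step 2: log (φp/φq) splits as a sum of marginal-log terms
  set g1 : A × C → ℝ := fun ac => Real.log (margAC p ac / margAC q ac) with hg1
  set g2 : B × C → ℝ := fun bc => Real.log (margBC p bc / margBC q bc) with hg2
  set g3 : C → ℝ := fun c => Real.log (margC p c / margC q c) with hg3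
  have hlog : ∀ x : A × B × C, Real.log (modularize p x / modularize q x)
      = g1 (x.1, x.2.2) + g2 (x.2.1, x.2.2) - g3 x.2.2 := by
    intro x
    have h1' := margAC_pos p hppos (x.1, x.2.2)
    have h2' := margBC_pos p hppos (x.2.1, x.2.2)
    have h3' := margC_pos p hppos x.2.2
    have h4' := margAC_pos q hqpos (x.1, x.2.2)
    have h5' := margBC_pos q hqpos (x.2.1, x.2.2)
    have h6' := margC_pos q hqpos x.2.2
    have heq : modularize p x / modularize q x
        = (margAC p (x.1, x.2.2) / margAC q (x.1, x.2.2))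
          * (margBC p (x.2.1, x.2.2) / margBC q (x.2.1, x.2.2))
          / (margC p x.2.2 / margC q x.2.2) := by
      unfold modularize
      field_simp
    rw [heq, Real.log_div (mul_pos (div_pos h1' h4') (div_pos h2' h5')).ne'
      (div_pos h3' h6').ne', Real.log_mul (div_pos h1' h4').ne' (div_pos h2' h5').ne']
  -- step 3: the cross term depends only on the marginals, which agree for p and φp
  have hsplit : ∀ r : A × B × C → ℝ,
      ∑ x, r x * Real.log (modularize p x / modularize q x)
        = ∑ ac, margAC r ac * g1 ac + ∑ bc, margBC r bc * g2 bc - ∑ c, margC r c * g3 c := by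
    intro r
    simp_rw [hlog]
    simp_rw [mul_sub, mul_add, Finset.sum_sub_distrib, Finset.sum_add_distrib]
    rw [sumAC, sumBC, sumC]
  have h2 : ∑ x, p x * Real.log (modularize p x / modularize q x)
      = KL (modularize p) (modularize q) := by
    have hKL : KL (modularize p) (modularize q)
        = ∑ x, modularize p x * Real.log (modularize p x / modularize q x) := rfl
    rw [hKL, hsplit p, hsplit (modularize p)]
    simp_rw [margAC_modularize p hppos, margBC_modularize p hppos, margC_modularize p hppos]
  rw [h1, h2]
end

section
/- (Entropy production bound from modularity, discrete-time version of Eq. (44) of the paper.) Let A and B be nonempty finite types, T_A a stochastic matrix on A with stationary distribution π_A (T_A π_A = π_A) having π_A a > 0 for all a, and T_B a stochastic matrix on B with stationary distribution π_B having π_B b > 0 for all b. Let T be the stochastic matrix on A × B defined by T (a, b) (a', b') = T_A a a' * T_B b b', and let π = π_A ⊗ π_B. Define the mutual information of a distribution p on A × B as I(p) = D(p‖p_A ⊗ p_B). Then for every probability distribution p on A × B: D(p‖π) − D(T p‖π) ≥ I(p) − I(T p), and I(p) − I(T p) ≥ 0. -/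
open Finset

/-- A (column-)stochastic matrix on a finite type. -/
def IsStochastic {Y : Type*} [Fintype Y] (T : Y → Y → ℝ) : Prop :=
  (∀ y y', 0 ≤ T y y') ∧ ∀ y', ∑ y, T y y' = 1

/-- Action of a stochastic matrix on a distribution. -/
noncomputable def mapply {Y : Type*} [Fintype Y] (T : Y → Y → ℝ) (p : Y → ℝ) : Y → ℝ :=
  fun y => ∑ y', T y y' * p y'

/-- Marginal of a joint distribution on `A × B` over `A`. -/
noncomputable def margA {A B : Type*} [Fintype A] [Fintype B] (p : A × B → ℝ) : A → ℝ :=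
  fun a => ∑ b, p (a, b)

/-- Marginal of a joint distribution on `A × B` over `B`. -/
noncomputable def margB {A B : Type*} [Fintype A] [Fintype B] (p : A × B → ℝ) : B → ℝ :=
  fun b => ∑ a, p (a, b)

/-- Product distribution `(r ⊗ s)(a, b) = r a * s b`. -/
def prodD {A B : Type*} (r : A → ℝ) (s : B → ℝ) : A × B → ℝ :=
  fun ab => r ab.1 * s ab.2

/-- Mutual information of a joint distribution on `A × B`. -/
noncomputable def mutInf {A B : Type*} [Fintype A] [Fintype B] (p : A × B → ℝ) : ℝ :=
  KL p (prodD (margA p) (margB p))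

/-- The log-sum inequality. -/
lemma log_sum_ineq {ι : Type*} (s : Finset ι) (a b : ι → ℝ)
    (ha : ∀ i ∈ s, 0 ≤ a i) (hb : ∀ i ∈ s, 0 ≤ b i)
    (hab : ∀ i ∈ s, b i = 0 → a i = 0) :
    (∑ i ∈ s, a i) * Real.log ((∑ i ∈ s, a i) / (∑ i ∈ s, b i))
      ≤ ∑ i ∈ s, a i * Real.log (a i / b i) := by
  classical
  set t := s.filter (fun i => b i ≠ 0) with ht
  have hts : t ⊆ s := filter_subset _ _
  have hbpos : ∀ i ∈ t, 0 < b i := fun i hi => by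
    have := (mem_filter.1 hi)
    exact lt_of_le_of_ne (hb i this.1) (Ne.symm this.2)
  have hsa : ∑ i ∈ s, a i = ∑ i ∈ t, a i := by
    refine (Finset.sum_subset hts ?_).symm
    intro i hi hni
    exact hab i hi (by_contra fun h => hni (mem_filter.2 ⟨hi, h⟩))
  have hsb : ∑ i ∈ s, b i = ∑ i ∈ t, b i := by
    refine (Finset.sum_subset hts ?_).symm
    intro i hi hni
    by_contra h
    exact hni (mem_filter.2 ⟨hi, h⟩)
  have hsr : ∑ i ∈ s, a i * Real.log (a i / b i)
      = ∑ i ∈ t, a i * Real.log (a i / b i) := by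
    refine (Finset.sum_subset hts ?_).symm
    intro i hi hni
    rw [hab i hi (by_contra fun h => hni (mem_filter.2 ⟨hi, h⟩)), zero_mul]
  rw [hsa, hsb, hsr]
  set A := ∑ i ∈ t, a i with hA
  set B := ∑ i ∈ t, b i with hB
  have hB0 : 0 ≤ B := Finset.sum_nonneg fun i hi => (hbpos i hi).le
  rcases eq_or_lt_of_le hB0 with hB0' | hBpos
  · have : ∀ i ∈ t, b i = 0 := by
      intro i hi
      have := Finset.sum_eq_zero_iff_of_nonneg (fun i hi => (hbpos i hi).le) |>.1 hB0'.symm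
      exact this i hi
    have hA0 : A = 0 := Finset.sum_eq_zero fun i hi =>
      ((mem_filter.1 hi).2 (this i hi)).elim
    rw [hA0, zero_mul]
    exact Finset.sum_nonneg fun i hi => ((mem_filter.1 hi).2 (this i hi)).elim
  · have h₁ : ∑ i ∈ t, b i / B = 1 := by
      rw [← Finset.sum_div, ← hB, div_self hBpos.ne']
    have key := Real.convexOn_mul_log.map_sum_le
      (t := t) (w := fun i => b i / B) (p := fun i => a i / b i)
      (fun i hi => div_nonneg (hbpos i hi).le hBpos.le) h₁
      (fun i hi => Set.mem_Ici.2 (div_nonneg (ha i (hts hi)) (hbpos i hi).le))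
    simp only [smul_eq_mul] at key
    have hsum : ∑ i ∈ t, (b i / B) * (a i / b i) = A / B := by
      have heq : ∀ i ∈ t, (b i / B) * (a i / b i) = a i / B := by
        intro i hi
        have hbi : b i ≠ 0 := (hbpos i hi).ne'
        have hBne : B ≠ 0 := hBpos.ne'
        field_simp
      rw [Finset.sum_congr rfl heq, ← Finset.sum_div, ← hA]
    rw [hsum] at key
    have key2 : B * ((A / B) * Real.log (A / B))
        ≤ ∑ i ∈ t, a i * Real.log (a i / b i) := by
      calc B * ((A / B) * Real.log (A / B))
          ≤ B * ∑ i ∈ t, (b i / B) * ((a i / b i) * Real.log (a i / b i)) :=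
            mul_le_mul_of_nonneg_left key hBpos.le
        _ = ∑ i ∈ t, a i * Real.log (a i / b i) := by
            rw [Finset.mul_sum]
            refine Finset.sum_congr rfl fun i hi => ?_
            have hbi : b i ≠ 0 := (hbpos i hi).ne'
            have hBne : B ≠ 0 := hBpos.ne'
            field_simp
    calc A * Real.log (A / B) = B * ((A / B) * Real.log (A / B)) := by
          field_simp
      _ ≤ _ := key2

/-- The data-processing inequality for KL divergence under a stochastic map. -/
lemma dpi {Y : Type*} [Fintype Y] (T : Y → Y → ℝ) (hT : IsStochastic T)
    (p q : Y → ℝ) (hp : ∀ y, 0 ≤ p y) (hq : ∀ y, 0 ≤ q y)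
    (hac : ∀ y, q y = 0 → p y = 0) :
    KL (mapply T p) (mapply T q) ≤ KL p q := by
  classical
  have step1 : KL (mapply T p) (mapply T q)
      ≤ ∑ y, ∑ y', (T y y' * p y') * Real.log ((T y y' * p y') / (T y y' * q y')) := by
    refine Finset.sum_le_sum fun y _ => ?_
    exact log_sum_ineq univ (fun y' => T y y' * p y') (fun y' => T y y' * q y')
      (fun y' _ => mul_nonneg (hT.1 y y') (hp y'))
      (fun y' _ => mul_nonneg (hT.1 y y') (hq y'))
      (fun y' _ h => by
        rcases mul_eq_zero.1 h with h | h
        · rw [h, zero_mul]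
        · rw [hac y' h, mul_zero])
  have step2 : ∀ y y', (T y y' * p y') * Real.log ((T y y' * p y') / (T y y' * q y'))
      = T y y' * (p y' * Real.log (p y' / q y')) := by
    intro y y'
    rcases eq_or_ne (T y y') 0 with h | h
    · rw [h]; ring_nf
    rcases eq_or_ne (p y') 0 with h2 | h2
    · rw [h2]; ring_nf
    have hq' : q y' ≠ 0 := fun hz => h2 (hac y' hz)
    rw [mul_div_mul_left _ _ h]
    ring
  calc KL (mapply T p) (mapply T q)
      ≤ ∑ y, ∑ y', (T y y' * p y') * Real.log ((T y y' * p y') / (T y y' * q y')) := step1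
    _ = ∑ y, ∑ y', T y y' * (p y' * Real.log (p y' / q y')) :=
        Finset.sum_congr rfl fun y _ => Finset.sum_congr rfl fun y' _ => step2 y y'
    _ = ∑ y', (∑ y, T y y') * (p y' * Real.log (p y' / q y')) := by
        rw [Finset.sum_comm]
        exact Finset.sum_congr rfl fun y' _ => (Finset.sum_mul ..).symm
    _ = KL p q := by
        refine Finset.sum_congr rfl fun y' _ => ?_
        rw [hT.2 y', one_mul]

/-- Chain-rule decomposition of the KL divergence against a positive product
distribution. -/
lemma KL_decomp {A B : Type*} [Fintype A] [Fintype B]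
    (p : A × B → ℝ) (hp : ∀ ab, 0 ≤ p ab)
    (πA : A → ℝ) (hπApos : ∀ a, 0 < πA a)
    (πB : B → ℝ) (hπBpos : ∀ b, 0 < πB b) :
    KL p (prodD πA πB) = mutInf p + KL (margA p) πA + KL (margB p) πB := by
  classical
  have hmargA : ∀ a b, p (a, b) ≤ margA p a := fun a b =>
    Finset.single_le_sum (f := fun b => p (a, b)) (fun b _ => hp _) (mem_univ b)
  have hmargB : ∀ a b, p (a, b) ≤ margB p b := fun a b =>
    Finset.single_le_sum (f := fun a => p (a, b)) (fun a _ => hp _) (mem_univ a)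
  have key : ∀ ab : A × B, p ab * Real.log (p ab / prodD πA πB ab)
      = p ab * Real.log (p ab / prodD (margA p) (margB p) ab)
        + p ab * Real.log (margA p ab.1 / πA ab.1)
        + p ab * Real.log (margB p ab.2 / πB ab.2) := by
    rintro ⟨a, b⟩
    rcases eq_or_lt_of_le (hp (a, b)) with h0 | hpos
    · rw [← h0]; ring
    have hpAp : 0 < margA p a := lt_of_lt_of_le hpos (hmargA a b)
    have hpBp : 0 < margB p b := lt_of_lt_of_le hpos (hmargB a b)
    have e1 : Real.log (p (a, b) / (πA a * πB b))
        = Real.log (p (a, b)) - Real.log (πA a) - Real.log (πB b) := by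
      rw [Real.log_div hpos.ne' (mul_pos (hπApos a) (hπBpos b)).ne',
        Real.log_mul (hπApos a).ne' (hπBpos b).ne']
      ring
    have e2 : Real.log (p (a, b) / (margA p a * margB p b))
        = Real.log (p (a, b)) - Real.log (margA p a) - Real.log (margB p b) := by
      rw [Real.log_div hpos.ne' (mul_pos hpAp hpBp).ne',
        Real.log_mul hpAp.ne' hpBp.ne']
      ring
    have e3 : Real.log (margA p a / πA a)
        = Real.log (margA p a) - Real.log (πA a) :=
      Real.log_div hpAp.ne' (hπApos a).ne'
    have e4 : Real.log (margB p b / πB b)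
        = Real.log (margB p b) - Real.log (πB b) :=
      Real.log_div hpBp.ne' (hπBpos b).ne'
    show p (a, b) * Real.log (p (a, b) / (πA a * πB b)) = _
    rw [e1]
    show _ = p (a, b) * Real.log (p (a, b) / (margA p a * margB p b))
        + p (a, b) * Real.log (margA p a / πA a)
        + p (a, b) * Real.log (margB p b / πB b)
    rw [e2, e3, e4]
    ring
  have hA : ∑ ab : A × B, p ab * Real.log (margA p ab.1 / πA ab.1)
      = KL (margA p) πA := by
    rw [KL, Fintype.sum_prod_type]
    refine Finset.sum_congr rfl fun a _ => ?_
    show ∑ b, p (a, b) * Real.log (margA p a / πA a) = _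
    rw [← Finset.sum_mul]
    rfl
  have hB : ∑ ab : A × B, p ab * Real.log (margB p ab.2 / πB ab.2)
      = KL (margB p) πB := by
    rw [KL, Fintype.sum_prod_type_right]
    refine Finset.sum_congr rfl fun b _ => ?_
    show ∑ a, p (a, b) * Real.log (margB p b / πB b) = _
    rw [← Finset.sum_mul]
    rfl
  calc KL p (prodD πA πB)
      = ∑ ab : A × B, (p ab * Real.log (p ab / prodD (margA p) (margB p) ab)
        + p ab * Real.log (margA p ab.1 / πA ab.1)
        + p ab * Real.log (margB p ab.2 / πB ab.2)) :=
        Finset.sum_congr rfl fun ab _ => key ab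
    _ = mutInf p + KL (margA p) πA + KL (margB p) πB := by
        rw [Finset.sum_add_distrib, Finset.sum_add_distrib, hA, hB]
        rfl

/-- Entropy production bound from modularity:
`D(p‖π) − D(T p‖π) ≥ I(p) − I(T p) ≥ 0`. -/
theorem stmt15 {A B : Type*} [Fintype A] [Fintype B] [Nonempty A] [Nonempty B]
    (TA : A → A → ℝ) (hTA : IsStochastic TA)
    (πA : A → ℝ) (hπA : IsDist πA) (hπAstat : mapply TA πA = πA)
    (hπApos : ∀ a, 0 < πA a)
    (TB : B → B → ℝ) (hTB : IsStochastic TB)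
    (πB : B → ℝ) (hπB : IsDist πB) (hπBstat : mapply TB πB = πB)
    (hπBpos : ∀ b, 0 < πB b)
    (T : A × B → A × B → ℝ)
    (hT : ∀ a b a' b', T (a, b) (a', b') = TA a a' * TB b b')
    (p : A × B → ℝ) (hp : IsDist p) :
    KL p (prodD πA πB) - KL (mapply T p) (prodD πA πB)
      ≥ mutInf p - mutInf (mapply T p)
    ∧ mutInf p - mutInf (mapply T p) ≥ 0 := by
  classical
  obtain ⟨hp0, hp1⟩ := hp
  have hTstoch : IsStochastic T := by
    constructor
    · rintro ⟨a, b⟩ ⟨a', b'⟩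
      rw [hT]
      exact mul_nonneg (hTA.1 a a') (hTB.1 b b')
    · rintro ⟨a', b'⟩
      rw [Fintype.sum_prod_type]
      simp_rw [hT]
      rw [← Finset.sum_mul_sum, hTA.2 a', hTB.2 b', one_mul]
  set Tp := mapply T p with hTp
  have hTp0 : ∀ ab, 0 ≤ Tp ab := fun ab =>
    Finset.sum_nonneg fun ab' _ => mul_nonneg (hTstoch.1 ab ab') (hp0 ab')
  -- marginals of Tp
  have hmA : margA Tp = mapply TA (margA p) := by
    funext a
    show ∑ b, ∑ ab' : A × B, T (a, b) ab' * p ab' = ∑ a', TA a a' * ∑ b', p (a', b')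
    calc ∑ b, ∑ ab' : A × B, T (a, b) ab' * p ab'
        = ∑ b, ∑ a', ∑ b', TA a a' * TB b b' * p (a', b') := by
          refine Finset.sum_congr rfl fun b _ => ?_
          rw [Fintype.sum_prod_type]
          exact Finset.sum_congr rfl fun a' _ =>
            Finset.sum_congr rfl fun b' _ => by rw [hT]
      _ = ∑ a', ∑ b', (∑ b, TB b b') * (TA a a' * p (a', b')) := by
          rw [Finset.sum_comm]
          refine Finset.sum_congr rfl fun a' _ => ?_
          rw [Finset.sum_comm]
          refine Finset.sum_congr rfl fun b' _ => ?_
          rw [Finset.sum_mul]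
          exact Finset.sum_congr rfl fun b _ => by ring
      _ = ∑ a', TA a a' * ∑ b', p (a', b') := by
          refine Finset.sum_congr rfl fun a' _ => ?_
          rw [Finset.mul_sum]
          exact Finset.sum_congr rfl fun b' _ => by rw [hTB.2 b', one_mul]
  have hmB : margB Tp = mapply TB (margB p) := by
    funext b
    show ∑ a, ∑ ab' : A × B, T (a, b) ab' * p ab' = ∑ b', TB b b' * ∑ a', p (a', b')
    calc ∑ a, ∑ ab' : A × B, T (a, b) ab' * p ab'
        = ∑ a, ∑ b', ∑ a', TA a a' * TB b b' * p (a', b') := by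
          refine Finset.sum_congr rfl fun a _ => ?_
          rw [Fintype.sum_prod_type_right]
          exact Finset.sum_congr rfl fun b' _ =>
            Finset.sum_congr rfl fun a' _ => by rw [hT]
      _ = ∑ b', ∑ a', (∑ a, TA a a') * (TB b b' * p (a', b')) := by
          rw [Finset.sum_comm]
          refine Finset.sum_congr rfl fun b' _ => ?_
          rw [Finset.sum_comm]
          refine Finset.sum_congr rfl fun a' _ => ?_
          rw [Finset.sum_mul]
          exact Finset.sum_congr rfl fun a _ => by ring
      _ = ∑ b', TB b b' * ∑ a', p (a', b') := by
          refine Finset.sum_congr rfl fun b' _ => ?_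
          rw [Finset.mul_sum]
          exact Finset.sum_congr rfl fun a' _ => by rw [hTA.2 a', one_mul]
  -- T maps product distributions to product distributions
  have hprod : ∀ (r : A → ℝ) (s : B → ℝ),
      mapply T (prodD r s) = prodD (mapply TA r) (mapply TB s) := by
    intro r s
    funext ab
    obtain ⟨a, b⟩ := ab
    show ∑ ab', T (a, b) ab' * (r ab'.1 * s ab'.2)
      = (∑ a', TA a a' * r a') * (∑ b', TB b b' * s b')
    rw [Fintype.sum_prod_type, Finset.sum_mul_sum]
    refine Finset.sum_congr rfl fun a' _ => Finset.sum_congr rfl fun b' _ => ?_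
    rw [hT]
    ring
  -- data processing inequalities
  have hmargA_le : ∀ a b, p (a, b) ≤ margA p a := fun a b =>
    Finset.single_le_sum (f := fun b => p (a, b)) (fun b _ => hp0 _) (mem_univ b)
  have hmargB_le : ∀ a b, p (a, b) ≤ margB p b := fun a b =>
    Finset.single_le_sum (f := fun a => p (a, b)) (fun a _ => hp0 _) (mem_univ a)
  have hmA0 : ∀ a, 0 ≤ margA p a := fun a => Finset.sum_nonneg fun b _ => hp0 _
  have hmB0 : ∀ b, 0 ≤ margB p b := fun b => Finset.sum_nonneg fun a _ => hp0 _
  -- I(p) ≥ I(Tp)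
  have hIpTp : mutInf Tp ≤ mutInf p := by
    have : mutInf Tp = KL (mapply T p) (mapply T (prodD (margA p) (margB p))) := by
      rw [mutInf, hmA, hmB, hprod]
    rw [this, mutInf]
    refine dpi T hTstoch p (prodD (margA p) (margB p)) hp0
      (fun ab => mul_nonneg (hmA0 _) (hmB0 _)) ?_
    rintro ⟨a, b⟩ h
    rcases mul_eq_zero.1 h with h | h
    · exact le_antisymm (h ▸ hmargA_le a b) (hp0 _)
    · exact le_antisymm (h ▸ hmargB_le a b) (hp0 _)
  -- KL decompositions
  have d1 : KL p (prodD πA πB) = mutInf p + KL (margA p) πA + KL (margB p) πB :=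
    KL_decomp p hp0 πA hπApos πB hπBpos
  have d2 : KL Tp (prodD πA πB)
      = mutInf Tp + KL (margA Tp) πA + KL (margB Tp) πB :=
    KL_decomp Tp hTp0 πA hπApos πB hπBpos
  -- marginal KL contractions
  have hA_contr : KL (margA Tp) πA ≤ KL (margA p) πA := by
    rw [hmA]
    have := dpi TA hTA (margA p) πA hmA0 (fun a => (hπApos a).le)
      (fun a h => absurd h (hπApos a).ne')
    rwa [hπAstat] at this
  have hB_contr : KL (margB Tp) πB ≤ KL (margB p) πB := by
    rw [hmB]
    have := dpi TB hTB (margB p) πB hmB0 (fun b => (hπBpos b).le)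
      (fun b h => absurd h (hπBpos b).ne')
    rwa [hπBstat] at this
  constructor
  · rw [d1, d2]
    linarith
  · linarith
end

section
/- (Average conditional free energy equals marginal free energy plus mutual information.) Let X and M be nonempty finite types, β > 0, E : X → ℝ an energy function, and P a probability distribution on X × M with marginals P_X x = ∑_m P (x, m) and P_M m = ∑_x P (x, m), such that P_M m > 0 for every m. For each m define the conditional distribution P_{X|m} x = P (x, m) / P_M m. Then ∑_m P_M m * F(P_{X|m}, E) = F(P_X, E) + β⁻¹ * D(P‖P_X ⊗ P_M), where (P_X ⊗ P_M)(x, m) = P_X x * P_M m. -/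
open Finset

/-- Shannon entropy (terms with `p x = 0` contribute `0`). -/
noncomputable def ShEnt {X : Type*} [Fintype X] (p : X → ℝ) : ℝ :=
  -∑ x, p x * Real.log (p x)

/-- Nonequilibrium free energy. -/
noncomputable def FreeEnergy {X : Type*} [Fintype X] (β : ℝ) (p E : X → ℝ) : ℝ :=
  (∑ x, p x * E x) - β⁻¹ * ShEnt p

/-- Average conditional free energy equals marginal free energy plus
`β⁻¹` times the mutual information between system and measurement. -/
theorem stmt18 {X M : Type*} [Fintype X] [Fintype M] [Nonempty X] [Nonempty M]
    (β : ℝ) (hβ : 0 < β) (E : X → ℝ)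
    (P : X × M → ℝ) (hP : IsDist P)
    (hPM : ∀ m, 0 < ∑ x, P (x, m)) :
    ∑ m, (∑ x, P (x, m)) * FreeEnergy β (fun x => P (x, m) / ∑ x', P (x', m)) E
      = FreeEnergy β (fun x => ∑ m, P (x, m)) E
        + β⁻¹ * KL P (fun xm => (∑ m, P (xm.1, m)) * (∑ x, P (x, xm.2))) := by
  obtain ⟨hPnn, hPsum⟩ := hP
  have hPMne : ∀ m, (∑ x, P (x, m)) ≠ 0 := fun m => (hPM m).ne'
  -- termwise facts
  have key : ∀ x m, P (x, m) * Real.log (P (x, m) / ((∑ m', P (x, m')) * ∑ x', P (x', m)))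
      = P (x, m) * Real.log (P (x, m) / ∑ x', P (x', m))
        - P (x, m) * Real.log (∑ m', P (x, m')) := by
    intro x m
    by_cases h : P (x, m) = 0
    · simp [h]
    · have hpos : 0 < P (x, m) := lt_of_le_of_ne (hPnn _) (Ne.symm h)
      have hPX : 0 < ∑ m', P (x, m') :=
        lt_of_lt_of_le hpos (Finset.single_le_sum (fun m' _ => hPnn (x, m')) (mem_univ m))
      rw [Real.log_div h (mul_ne_zero hPX.ne' (hPMne m)),
          Real.log_div h (hPMne m), Real.log_mul hPX.ne' (hPMne m)]
      ring
  -- rewrite the conditional free energies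
  have hcond : ∀ m, (∑ x, P (x, m)) * FreeEnergy β (fun x => P (x, m) / ∑ x', P (x', m)) E
      = (∑ x, P (x, m) * E x)
        + β⁻¹ * ∑ x, P (x, m) * Real.log (P (x, m) / ∑ x', P (x', m)) := by
    intro m
    have hA := hPMne m
    have e1 : ∑ x, (P (x, m) / ∑ x', P (x', m)) * E x
        = (∑ x, P (x, m) * E x) / ∑ x', P (x', m) := by
      rw [Finset.sum_div]
      exact Finset.sum_congr rfl fun x _ => div_mul_eq_mul_div _ _ _
    have e2 : ∑ x, (P (x, m) / ∑ x', P (x', m)) * Real.log (P (x, m) / ∑ x', P (x', m))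
        = (∑ x, P (x, m) * Real.log (P (x, m) / ∑ x', P (x', m))) / ∑ x', P (x', m) := by
      rw [Finset.sum_div]
      exact Finset.sum_congr rfl fun x _ => div_mul_eq_mul_div _ _ _
    simp only [FreeEnergy, ShEnt, e1, e2]
    field_simp
    ring
  rw [Finset.sum_congr rfl fun m _ => hcond m, Finset.sum_add_distrib, ← Finset.mul_sum]
  have hEn : ∑ m, ∑ x, P (x, m) * E x = ∑ x, (∑ m, P (x, m)) * E x := by
    rw [Finset.sum_comm]
    exact Finset.sum_congr rfl fun x _ => (Finset.sum_mul _ _ _).symm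
  have hKL : KL P (fun xm => (∑ m, P (xm.1, m)) * (∑ x, P (x, xm.2)))
      = (∑ m, ∑ x, P (x, m) * Real.log (P (x, m) / ∑ x', P (x', m)))
        - ∑ x, (∑ m, P (x, m)) * Real.log (∑ m', P (x, m')) := by
    unfold KL
    rw [Fintype.sum_prod_type]
    rw [show (∑ x, ∑ m, P (x, m) * Real.log (P (x, m) / ((∑ m', P (x, m')) * ∑ x', P (x', m))))
        = ∑ x, ∑ m, (P (x, m) * Real.log (P (x, m) / ∑ x', P (x', m))
            - P (x, m) * Real.log (∑ m', P (x, m'))) from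
      Finset.sum_congr rfl fun x _ => Finset.sum_congr rfl fun m _ => key x m]
    simp only [Finset.sum_sub_distrib]
    congr 1
    · exact Finset.sum_comm
    · exact Finset.sum_congr rfl fun x _ => (Finset.sum_mul _ _ _).symm
  rw [hEn, hKL, FreeEnergy, ShEnt]
  ring
end

section
/- (Decomposition of acquired information into accessible and inaccessible parts, Eq. (15) of the paper.) Let X and M be nonempty finite types and φ an operator on probability distributions on X satisfying the Pythagorean identity. Let P be a probability distribution on X × M with marginals P_X and P_M such that P_M m > 0 for every m, and define the conditional distributions P_{X|m} x = P (x, m) / P_M m. Assume that P_X lies in the image of φ and that ∑_m P_M m * (φ P_{X|m}) x = P_X x for every x. Define the joint distribution Q on X × M by Q (x, m) = P_M m * (φ P_{X|m}) x, which has marginals Q_X = P_X and Q_M = P_M. Then D(P‖P_X ⊗ P_M) = D(Q‖P_X ⊗ P_M) + ∑_m P_M m * D(P_{X|m}‖φ P_{X|m}), i.e., the mutual information between X and M decomposes into the accessible information (the mutual information of Q) plus the average inaccessible divergence. -/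
open Finset

/-- `φ` satisfies the Pythagorean identity. -/
def Pythagorean {X : Type*} [Fintype X] (φ : (X → ℝ) → (X → ℝ)) : Prop :=
  ∀ p q : X → ℝ, IsDist p → IsDist q → (∃ r, IsDist r ∧ φ r = q) →
    KL p q = KL p (φ p) + KL (φ p) q

/-- Decomposition of acquired information into accessible and
inaccessible parts (Eq. (15) of the paper):
`I(X;M) = I(X̄;M) + ⟨D(P_{X|m}‖φ P_{X|m})⟩_m`. -/
theorem stmt19 {X M : Type*} [Fintype X] [Fintype M] [Nonempty X] [Nonempty M]
    (φ : (X → ℝ) → (X → ℝ))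
    (hφ : ∀ p, IsDist p → IsDist (φ p))
    (hpyth : Pythagorean φ)
    (P : X × M → ℝ) (hP : IsDist P)
    (PX : X → ℝ) (hPX : PX = fun x => ∑ m, P (x, m))
    (PM : M → ℝ) (hPM : PM = fun m => ∑ x, P (x, m))
    (hPMpos : ∀ m, 0 < PM m)
    (cond : M → X → ℝ) (hcond : ∀ m x, cond m x = P (x, m) / PM m)
    (hPXim : ∃ r, IsDist r ∧ φ r = PX)
    (hmix : ∀ x, ∑ m, PM m * φ (cond m) x = PX x)
    (Q : X × M → ℝ) (hQ : Q = fun xm => PM xm.2 * φ (cond xm.2) xm.1) :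
    KL P (fun xm => PX xm.1 * PM xm.2)
      = KL Q (fun xm => PX xm.1 * PM xm.2)
        + ∑ m, PM m * KL (cond m) (φ (cond m)) := by

  have hPMne : ∀ m, PM m ≠ 0 := fun m => (hPMpos m).ne'
  have hPeq : ∀ x m, P (x, m) = cond m x * PM m := by
    intro x m
    rw [hcond, div_mul_cancel₀ _ (hPMne m)]
  have hcd : ∀ m, IsDist (cond m) := by
    intro m
    refine ⟨fun x => ?_, ?_⟩
    · rw [hcond]; exact div_nonneg (hP.1 _) (hPMpos m).le
    · have hsum : ∑ x, P (x, m) = PM m := by rw [hPM]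
      simp only [hcond]
      rw [← Finset.sum_div, hsum, div_self (hPMne m)]
  have hPXd : IsDist PX := by
    refine ⟨fun x => ?_, ?_⟩
    · rw [hPX]; exact Finset.sum_nonneg fun m _ => hP.1 _
    · rw [hPX]
      rw [← Fintype.sum_prod_type]
      exact hP.2
  have key : ∀ (f : M → X → ℝ), (∀ m x, 0 ≤ f m x) →
      KL (fun xm : X × M => f xm.2 xm.1 * PM xm.2) (fun xm => PX xm.1 * PM xm.2)
        = ∑ m, PM m * KL (f m) PX := by
    intro f hf
    unfold KL
    rw [Fintype.sum_prod_type_right]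
    refine Finset.sum_congr rfl fun m _ => ?_
    rw [Finset.mul_sum]
    refine Finset.sum_congr rfl fun x _ => ?_
    rw [mul_div_mul_right _ _ (hPMne m)]
    ring
  have hKLP : KL P (fun xm => PX xm.1 * PM xm.2) = ∑ m, PM m * KL (cond m) PX := by
    have : P = fun xm : X × M => cond xm.2 xm.1 * PM xm.2 := by
      funext xm; exact hPeq xm.1 xm.2
    rw [this]
    exact key cond (fun m x => (hcd m).1 x)
  have hKLQ : KL Q (fun xm => PX xm.1 * PM xm.2) = ∑ m, PM m * KL (φ (cond m)) PX := by
    have : Q = fun xm : X × M => φ (cond xm.2) xm.1 * PM xm.2 := by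
      rw [hQ]; funext xm; ring
    rw [this]
    exact key (fun m => φ (cond m)) (fun m x => (hφ _ (hcd m)).1 x)
  rw [hKLP, hKLQ]
  rw [← Finset.sum_add_distrib]
  refine Finset.sum_congr rfl fun m _ => ?_
  rw [hpyth (cond m) PX (hcd m) hPXd hPXim]
  ring
end
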